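/- arXiv:1812.08485 — 3 statements merged into one kernel-verified Lean document; each statement's English description precedes it below -/
import Mathlib

section
/- Let E be a real inner product space, f : E → ℝ convex and differentiable with L-Lipschitz gradient (L > 0), and let x̄ be any minimizer of f, with f* = f(x̄). For any x ∈ E and any ᾱ ∈ (0, 1/L], setting x⁺ = x − ᾱ ∇f(x), we have f(x⁺) − f* ≤ (1/(2ᾱ)) (‖x − x̄‖² − ‖x⁺ − x̄‖²). -/
/-! Since the gradient is `L`-Lipschitz, `f` lies below its linear model at `x` plus
`L/2 ‖y - x‖²`; for the step `x⁺ = x - α ∇f(x)` with `Lα ≤ 1` this gives the sufficient decrease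
`f(x⁺) ≤ f(x) - α/2 ‖∇f(x)‖²`. Convexity gives `f(x) - f(x̄) ≤ ⟪∇f(x), x - x̄⟫`, and expanding
`‖x⁺ - x̄‖²` shows that the right-hand side of the claim is exactly
`⟪∇f(x), x - x̄⟫ - α/2 ‖∇f(x)‖²`. -/

open scoped RealInnerProductSpace

section

variable {E : Type*} [NormedAddCommGroup E] [InnerProductSpace ℝ E]

theorem HasFDerivAt.hasDerivAt_add_smul {f : E → ℝ} {g x v : E} {t : ℝ}
    (hf : HasFDerivAt f (innerSL ℝ g) (x + t • v)) :
    HasDerivAt (fun s : ℝ => f (x + s • v)) ⟪g, v⟫ t := by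
  have h := hf.comp_hasDerivAt t (((hasDerivAt_id t).smul_const v).const_add x)
  simp only [innerSL_apply_apply, one_smul, id] at h
  exact h

theorem ConvexOn.add_inner_sub_le {s : Set E} {f : E → ℝ} {g x y : E} (hf : ConvexOn ℝ s f)
    (hx : x ∈ s) (hy : y ∈ s) (hfx : HasFDerivAt f (innerSL ℝ g) x) :
    f x + ⟪g, y - x⟫ ≤ f y := by
  have hline : ConvexOn ℝ (AffineMap.lineMap x y ⁻¹' s) (fun t : ℝ => f (x + t • (y - x))) := by
    have hcomp : (fun t : ℝ => f (x + t • (y - x))) = f ∘ AffineMap.lineMap x y := by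
      funext t
      simp [AffineMap.lineMap_apply, add_comm]
    rw [hcomp]
    exact hf.comp_affineMap _
  have hderiv0 : HasDerivAt (fun t : ℝ => f (x + t • (y - x))) ⟪g, y - x⟫ 0 :=
    HasFDerivAt.hasDerivAt_add_smul (by simpa using hfx)
  have h := hline.le_slope_of_hasDerivAt (by simpa using hx) (by simpa using hy) one_pos hderiv0
  simp only [slope_def_field, one_smul, add_sub_cancel, zero_smul, add_zero, sub_zero,
    div_one] at h
  linarith

theorem le_add_inner_add_sq_of_lipschitz_gradient {f : E → ℝ} {f' : E → E} {L : ℝ} {x : E}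
    (hf : ∀ z, HasFDerivAt f (innerSL ℝ (f' z)) z)
    (hlip : ∀ z, ‖f' z - f' x‖ ≤ L * ‖z - x‖) (y : E) :
    f y ≤ f x + ⟪f' x, y - x⟫ + L / 2 * ‖y - x‖ ^ 2 := by
  set v := y - x
  set φ : ℝ → ℝ := fun t => f (x + t • v) - t * ⟪f' x, v⟫ - L / 2 * t ^ 2 * ‖v‖ ^ 2
  have hφ : ∀ t, HasDerivAt φ (⟪f' (x + t • v), v⟫ - ⟪f' x, v⟫ - L * t * ‖v‖ ^ 2) t := by
    intro t
    have h := (((hf (x + t • v)).hasDerivAt_add_smul).sub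
      ((hasDerivAt_id t).mul_const ⟪f' x, v⟫)).sub
      (((hasDerivAt_pow 2 t).const_mul (L / 2)).mul_const (‖v‖ ^ 2))
    exact h.congr_deriv (by simp only [one_mul, Nat.cast_ofNat, Nat.add_one_sub_one, pow_one]; ring)
  have hφ_nonpos : ∀ t ∈ interior (Set.Icc (0 : ℝ) 1),
      ⟪f' (x + t • v), v⟫ - ⟪f' x, v⟫ - L * t * ‖v‖ ^ 2 ≤ 0 := by
    intro t ht
    rw [interior_Icc] at ht
    calc ⟪f' (x + t • v), v⟫ - ⟪f' x, v⟫ - L * t * ‖v‖ ^ 2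
        = ⟪f' (x + t • v) - f' x, v⟫ - L * t * ‖v‖ ^ 2 := by rw [inner_sub_left]
      _ ≤ ‖f' (x + t • v) - f' x‖ * ‖v‖ - L * ‖t • v‖ * ‖v‖ := by
          rw [norm_smul, Real.norm_of_nonneg ht.1.le]
          linarith [real_inner_le_norm (f' (x + t • v) - f' x) v]
      _ ≤ 0 := by
          have := mul_le_mul_of_nonneg_right (hlip (x + t • v)) (norm_nonneg v)
          simp only [add_sub_cancel_left] at this
          linarith
  have hanti : AntitoneOn φ (Set.Icc 0 1) :=
    antitoneOn_of_hasDerivWithinAt_nonpos (convex_Icc 0 1)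
      (fun t _ => (hφ t).continuousAt.continuousWithinAt)
      (fun t _ => (hφ t).hasDerivWithinAt) hφ_nonpos
  have h01 : φ 1 ≤ φ 0 := hanti (by simp) (by simp) zero_le_one
  simp only [φ, v, one_smul, zero_smul, add_zero, add_sub_cancel, one_mul, one_pow, mul_one,
    zero_mul, sub_zero, ne_eq, OfNat.ofNat_ne_zero, not_false_eq_true, zero_pow, mul_zero] at h01
  linarith

theorem gradient_step_le_sub {f : E → ℝ} {f' : E → E} {L α : ℝ} {x : E}
    (hf : ∀ z, HasFDerivAt f (innerSL ℝ (f' z)) z)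
    (hlip : ∀ z, ‖f' z - f' x‖ ≤ L * ‖z - x‖) (hα0 : 0 ≤ α) (hαL : L * α ≤ 1) :
    f (x - α • f' x) ≤ f x - α / 2 * ‖f' x‖ ^ 2 := by
  have h := le_add_inner_add_sq_of_lipschitz_gradient hf hlip (x - α • f' x)
  rw [sub_sub_cancel_left, inner_neg_right, inner_smul_right, real_inner_self_eq_norm_sq,
    norm_neg, norm_smul, Real.norm_of_nonneg hα0] at h
  nlinarith [mul_nonneg (mul_nonneg (sub_nonneg.mpr hαL) hα0) (sq_nonneg ‖f' x‖)]

end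

theorem gradient_descent_one_step_bound_general
    {E : Type*} [NormedAddCommGroup E] [InnerProductSpace ℝ E]
    (f : E → ℝ) (f' : E → E) (L : ℝ) (hL : 0 < L)
    (hconv : ConvexOn ℝ Set.univ f)
    (hderiv : ∀ y, HasFDerivAt f (innerSL ℝ (f' y)) y)
    (hlip : ∀ y z, ‖f' y - f' z‖ ≤ L * ‖y - z‖)
    (xbar : E)
    (α : ℝ) (hα0 : 0 < α) (hαL : α ≤ 1 / L)
    (x : E) :
    f (x - α • f' x) - f xbar ≤
      (1 / (2 * α)) * (‖x - xbar‖ ^ 2 - ‖x - α • f' x - xbar‖ ^ 2) := by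
  have hαL' : L * α ≤ 1 := by rwa [le_div_iff₀ hL, mul_comm] at hαL
  have hdecrease := gradient_step_le_sub hderiv (fun z => hlip z x) hα0.le hαL'
  have hsupport : f x - f xbar ≤ ⟪f' x, x - xbar⟫ := by
    have h := hconv.add_inner_sub_le (Set.mem_univ x) (Set.mem_univ xbar) (hderiv x)
    rw [← neg_sub x xbar, inner_neg_right] at h
    linarith
  have hdist : ‖x - xbar‖ ^ 2 - ‖x - α • f' x - xbar‖ ^ 2
      = 2 * α * ⟪f' x, x - xbar⟫ - α ^ 2 * ‖f' x‖ ^ 2 := by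
    rw [sub_right_comm, norm_sub_sq_real (x - xbar), real_inner_smul_right, real_inner_comm,
      norm_smul, Real.norm_of_nonneg hα0.le]
    ring
  rw [hdist]
  field_simp
  linarith

/-- One step of gradient descent with step `ᾱ ∈ (0, 1/L]` satisfies
`f(x⁺) − f* ≤ (1/(2ᾱ)) (‖x − x̄‖² − ‖x⁺ − x̄‖²)` for any minimizer `x̄`. -/
theorem gradient_descent_one_step_bound
    {E : Type*} [NormedAddCommGroup E] [InnerProductSpace ℝ E]
    (f : E → ℝ) (f' : E → E) (L : ℝ) (hL : 0 < L)
    (hconv : ConvexOn ℝ Set.univ f)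
    (hderiv : ∀ y, HasFDerivAt f (innerSL ℝ (f' y)) y)
    (hlip : ∀ y z, ‖f' y - f' z‖ ≤ L * ‖y - z‖)
    (xbar : E) (hxbar : ∀ y, f xbar ≤ f y)
    (α : ℝ) (hα0 : 0 < α) (hαL : α ≤ 1 / L)
    (x : E) :
    f (x - α • f' x) - f xbar ≤
      (1 / (2 * α)) * (‖x - xbar‖ ^ 2 - ‖x - α • f' x - xbar‖ ^ 2) :=
  gradient_descent_one_step_bound_general f f' L hL hconv hderiv hlip xbar α hα0 hαL x
end

section
/- Let E be a real inner product space, f : E → ℝ convex and differentiable with L-Lipschitz gradient (L > 0), with nonempty minimizer set Ω and f* = min f. Let γ ∈ (0,1], C₂ ∈ (0, (2−γ)/L], C₁ ≥ C₂, and suppose the iterates x_{k+1} = x_k − α_k ∇f(x_k) satisfy α_k ∈ [C₂, C₁] and f(x_{k+1}) ≤ f(x_k) − (γ α_k / 2) ‖∇f(x_k)‖² for all k. Then k·(f(x_k) − f*) → 0 as k → ∞; that is, f(x_k) − f* = o(1/k). -/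
/-!
Convexity gives `f xₖ - f* ≤ ⟪∇f(xₖ), xₖ - x*⟫`, and expanding `‖xₖ₊₁ - x*‖²` together with the
sufficient decrease condition turns this into `2 C₂ (f xₖ - f*) ≤ Vₖ - Vₖ₊₁` for the Lyapunov
function `Vₖ = ‖xₖ - x*‖² + (2 C₁ / γ) (f xₖ - f*)`. Hence the gaps `f xₖ - f*` are summable; being
also nonincreasing, they are `o(1/k)`.
-/

open Filter Finset Set Topology RealInnerProductSpace

/-- Olivier's theorem. -/
theorem Antitone.tendsto_nat_mul_of_summable {a : ℕ → ℝ} (ha : Antitone a) (hs : Summable a) :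
    Tendsto (fun n : ℕ => (n : ℝ) * a n) atTop (𝓝 0) := by
  have ha₀ : ∀ n, 0 ≤ a n := ha.le_of_tendsto hs.tendsto_atTop_zero
  have hS := hs.hasSum.tendsto_sum_nat
  have htail : Tendsto (fun n => 2 * (∑ i ∈ range n, a i - ∑ i ∈ range (n / 2), a i))
      atTop (𝓝 0) := by
    simpa using (hS.sub (hS.comp (Nat.tendsto_div_const_atTop two_ne_zero))).const_mul 2
  refine squeeze_zero (fun n => mul_nonneg n.cast_nonneg (ha₀ n)) (fun n => ?_) htail
  rw [← sum_Ico_eq_sub _ (Nat.div_le_self n 2)]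
  calc (n : ℝ) * a n ≤ 2 * ((n - n / 2 : ℕ) : ℝ) * a n := by
        gcongr
        · exact ha₀ n
        · exact_mod_cast (by omega : n ≤ 2 * (n - n / 2))
    _ = 2 * (#(Ico (n / 2) n) • a n) := by simp [nsmul_eq_mul, mul_assoc]
    _ ≤ 2 * ∑ i ∈ Ico (n / 2) n, a i := by
        gcongr
        exact card_nsmul_le_sum _ _ _ fun i hi => ha (mem_Ico.1 hi).2.le

theorem summable_of_le_sub_succ {a V : ℕ → ℝ} (ha : ∀ k, 0 ≤ a k) (hV : ∀ k, 0 ≤ V k)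
    (h : ∀ k, a k ≤ V k - V (k + 1)) : Summable a := by
  refine summable_of_sum_range_le ha (c := V 0) fun n => ?_
  calc ∑ k ∈ range n, a k ≤ ∑ k ∈ range n, (V k - V (k + 1)) := sum_le_sum fun k _ => h k
    _ = V 0 - V n := sum_range_sub' V n
    _ ≤ V 0 := sub_le_self _ (hV n)

theorem ConvexOn.add_le_of_hasFDerivAt {E : Type*} [NormedAddCommGroup E] [NormedSpace ℝ E]
    {s : Set E} {f : E → ℝ} (hf : ConvexOn ℝ s f) {φ : E →L[ℝ] ℝ} {a b : E} (ha : a ∈ s)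
    (hb : b ∈ s) (hφ : HasFDerivAt f φ a) : f a + φ (b - a) ≤ f b := by
  have hg : HasDerivAt (f ∘ (AffineMap.lineMap a b : ℝ → E)) (φ (b - a)) 0 := by
    have hφ' : HasFDerivAt f φ (AffineMap.lineMap a b (0 : ℝ)) := by simpa using hφ
    exact hφ'.comp_hasDerivAt 0 AffineMap.hasDerivAt_lineMap
  have hslope := (hf.comp_affineMap (AffineMap.lineMap a b)).le_slope_of_hasDerivAt
    (x := 0) (y := 1) (by simpa using ha) (by simpa using hb) one_pos hg
  simp only [slope_def_field, Function.comp_apply, AffineMap.lineMap_apply_zero,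
    AffineMap.lineMap_apply_one, sub_zero, div_one] at hslope
  linarith

section GradientStep

variable {E : Type*} [NormedAddCommGroup E] [InnerProductSpace ℝ E]

theorem sub_le_inner_of_convexOn {f : E → ℝ} (hf : ConvexOn ℝ univ f) {g y : E}
    (hg : HasFDerivAt f (innerSL ℝ g) y) (z : E) : f y - f z ≤ ⟪g, y - z⟫ := by
  have h := hf.add_le_of_hasFDerivAt (mem_univ y) (mem_univ z) hg
  rw [innerSL_apply_apply, ← neg_sub, inner_neg_right] at h
  linarith

theorem lyapunov_decrease_of_descent_step {f : E → ℝ} (hf : ConvexOn ℝ univ f) {g y z : E}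
    (hg : HasFDerivAt f (innerSL ℝ g) y) (hz : f z ≤ f y) {γ α C₁ C₂ : ℝ} (hγ : 0 < γ)
    (hC₂ : 0 ≤ C₂) (hα : α ∈ Icc C₂ C₁)
    (hdec : f (y - α • g) ≤ f y - γ * α / 2 * ‖g‖ ^ 2) :
    2 * C₂ * (f y - f z) ≤ (‖y - z‖ ^ 2 + 2 * C₁ / γ * (f y - f z))
      - (‖y - α • g - z‖ ^ 2 + 2 * C₁ / γ * (f (y - α • g) - f z)) := by
  obtain ⟨hαC₂, hαC₁⟩ := hα
  have hα₀ : 0 ≤ α := hC₂.trans hαC₂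
  have hexpand : ‖y - α • g - z‖ ^ 2 = ‖y - z‖ ^ 2 - 2 * α * ⟪g, y - z⟫ + α ^ 2 * ‖g‖ ^ 2 := by
    rw [sub_right_comm, norm_sub_sq_real, real_inner_smul_right, norm_smul, real_inner_comm,
      Real.norm_eq_abs, mul_pow, sq_abs]
    ring
  have hinner : C₂ * (f y - f z) ≤ α * ⟪g, y - z⟫ :=
    calc C₂ * (f y - f z) ≤ α * (f y - f z) := by gcongr
      _ ≤ α * ⟪g, y - z⟫ := by gcongr; exact sub_le_inner_of_convexOn hf hg z
  have hsq : α ^ 2 * ‖g‖ ^ 2 ≤ 2 * C₁ / γ * (f y - f (y - α • g)) := by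
    have hdec' : α * ‖g‖ ^ 2 ≤ 2 / γ * (f y - f (y - α • g)) := by
      rw [div_mul_eq_mul_div, le_div_iff₀ hγ]
      linarith
    calc α ^ 2 * ‖g‖ ^ 2 = α * (α * ‖g‖ ^ 2) := by ring
      _ ≤ C₁ * (2 / γ * (f y - f (y - α • g))) := by
          gcongr
          linarith
      _ = 2 * C₁ / γ * (f y - f (y - α • g)) := by ring
  rw [hexpand]
  linarith

end GradientStep

theorem gradient_descent_line_search_o_one_div_k_general
    {E : Type*} [NormedAddCommGroup E] [InnerProductSpace ℝ E]
    (f : E → ℝ) (f' : E → E)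
    (hconv : ConvexOn ℝ Set.univ f)
    (hderiv : ∀ y, HasFDerivAt f (innerSL ℝ (f' y)) y)
    (xstar : E) (hxstar : ∀ y, f xstar ≤ f y)
    (γ C₁ C₂ : ℝ) (hγ0 : 0 < γ)
    (hC₂0 : 0 < C₂)
    (α : ℕ → ℝ) (hα : ∀ k, α k ∈ Set.Icc C₂ C₁)
    (x : ℕ → E) (hx : ∀ k, x (k + 1) = x k - α k • f' (x k))
    (hdec : ∀ k, f (x (k + 1)) ≤ f (x k) - γ * α k / 2 * ‖f' (x k)‖ ^ 2) :
    Filter.Tendsto (fun k : ℕ => (k : ℝ) * (f (x k) - f xstar))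
      Filter.atTop (nhds 0) := by
  set δ : ℕ → ℝ := fun k => f (x k) - f xstar
  have hδ₀ (k : ℕ) : 0 ≤ δ k := sub_nonneg.2 (hxstar _)
  have hC₁ : 0 ≤ C₁ := hC₂0.le.trans ((hα 0).1.trans (hα 0).2)
  have hanti : Antitone δ := antitone_nat_of_succ_le fun k => by
    have : 0 ≤ γ * α k / 2 * ‖f' (x k)‖ ^ 2 := by
      have := hC₂0.trans_le (hα k).1
      positivity
    simp only [δ]
    linarith [hdec k]
  have hsummable : Summable δ := by
    refine (summable_mul_left_iff (by positivity : 2 * C₂ ≠ 0)).1 <|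
      summable_of_le_sub_succ (V := fun k => ‖x k - xstar‖ ^ 2 + 2 * C₁ / γ * δ k)
        (fun k => by have := hδ₀ k; positivity) (fun k => by have := hδ₀ k; positivity)
        fun k => ?_
    simpa only [δ, hx k] using lyapunov_decrease_of_descent_step hconv (hderiv (x k)) (hxstar _)
      hγ0 hC₂0.le (hα k) (hx k ▸ hdec k)
  exact hanti.tendsto_nat_mul_of_summable hsummable

/-- **Theorem 2 of the paper.** Gradient descent with step sizes
`α_k ∈ [C₂, C₁]`, `C₂ ∈ (0, (2−γ)/L]`, satisfying the sufficient decrease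
condition, achieves `f(x_k) − f* = o(1/k)`. -/
theorem gradient_descent_line_search_o_one_div_k
    {E : Type*} [NormedAddCommGroup E] [InnerProductSpace ℝ E]
    (f : E → ℝ) (f' : E → E) (L : ℝ) (hL : 0 < L)
    (hconv : ConvexOn ℝ Set.univ f)
    (hderiv : ∀ y, HasFDerivAt f (innerSL ℝ (f' y)) y)
    (hlip : ∀ y z, ‖f' y - f' z‖ ≤ L * ‖y - z‖)
    (xstar : E) (hxstar : ∀ y, f xstar ≤ f y)
    (γ C₁ C₂ : ℝ) (hγ0 : 0 < γ) (hγ1 : γ ≤ 1)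
    (hC₂0 : 0 < C₂) (hC₂L : C₂ ≤ (2 - γ) / L) (hC₁ : C₂ ≤ C₁)
    (α : ℕ → ℝ) (hα : ∀ k, α k ∈ Set.Icc C₂ C₁)
    (x : ℕ → E) (hx : ∀ k, x (k + 1) = x k - α k • f' (x k))
    (hdec : ∀ k, f (x (k + 1)) ≤ f (x k) - γ * α k / 2 * ‖f' (x k)‖ ^ 2) :
    Filter.Tendsto (fun k : ℕ => (k : ℝ) * (f (x k) - f xstar))
      Filter.atTop (nhds 0) :=
  gradient_descent_line_search_o_one_div_k_general f f' hconv hderiv xstar hxstar γ C₁ C₂ hγ0 hC₂0 α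
    hα x hx hdec
end

section
/- Let E be a real inner product space, f : E → ℝ convex and differentiable with L-Lipschitz gradient (L > 0), ψ : E → ℝ convex, F = f + ψ, and let x̄ be a minimizer of F with F* = F(x̄). Fix L̄ ≥ L and a point x ∈ E, let d be the global minimizer over E of d ↦ ⟨∇f(x), d⟩ + (L̄/2)‖d‖² + ψ(x + d), and set x⁺ = x + d. Then ‖x⁺ − x̄‖² − ‖x − x̄‖² ≤ (2/L̄)(F* − F(x⁺)). -/
/-! The step `d` minimizes a model of `F - f(x)` around `x` that is `L̄`-strongly convex, so its
value at the competitor `x̄ - x` exceeds its value at `d` by at least `L̄/2 ‖x⁺ - x̄‖²`. The descent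
lemma bounds `F(x⁺)` by `f(x)` plus the model at `d`, and the gradient inequality for the convex `f`
bounds `f(x)` plus the model at `x̄ - x` by `F(x̄) + L̄/2 ‖x - x̄‖²`. -/

open scoped RealInnerProductSpace
open AffineMap Set Filter Topology

section NormedSpace

variable {E : Type*} [NormedAddCommGroup E] [NormedSpace ℝ E]
  {f : E → ℝ} {f' : E → E →L[ℝ] ℝ}

theorem HasFDerivAt.comp_lineMap {a b : E} {t : ℝ} {φ : E →L[ℝ] ℝ}
    (hf : HasFDerivAt f φ (lineMap a b t)) :
    HasDerivAt (fun s : ℝ ↦ f (lineMap a b s)) (φ (b - a)) t :=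
  hf.comp_hasDerivAt t hasDerivAt_lineMap

theorem ConvexOn.add_fderiv_sub_le (hf : ConvexOn ℝ univ f) {a : E} {φ : E →L[ℝ] ℝ}
    (hfa : HasFDerivAt f φ a) (b : E) : f a + φ (b - a) ≤ f b := by
  have hline := (lineMap_apply_zero (k := ℝ) a b ▸ hfa).comp_lineMap
  have := (hf.comp_affineMap (lineMap a b)).le_slope_of_hasDerivAt (mem_univ 0) (mem_univ 1)
    one_pos hline
  simp only [slope_def_field, Function.comp_apply, lineMap_apply_one, lineMap_apply_zero,
    sub_zero, div_one] at this
  linarith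

theorem le_add_fderiv_sub_add_sq_of_lipschitz {L : ℝ} (hf : ∀ y, HasFDerivAt f (f' y) y)
    (hlip : ∀ y z, ‖f' y - f' z‖ ≤ L * ‖y - z‖) (a b : E) :
    f b ≤ f a + f' a (b - a) + L / 2 * ‖b - a‖ ^ 2 := by
  set h : ℝ → ℝ := fun t ↦ f (lineMap a b t) - t * f' a (b - a) - L / 2 * t ^ 2 * ‖b - a‖ ^ 2
  have hh : ∀ t : ℝ, HasDerivAt h
      (f' (lineMap a b t) (b - a) - f' a (b - a) - L * t * ‖b - a‖ ^ 2) t := by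
    intro t
    have := ((HasFDerivAt.comp_lineMap (a := a) (b := b) (hf _)).sub
      ((hasDerivAt_id t).mul_const (f' a (b - a)))).sub
      (((hasDerivAt_pow 2 t).const_mul (L / 2)).mul_const (‖b - a‖ ^ 2))
    exact this.congr_deriv (by push_cast; ring)
  have hslope : ∀ t ∈ Ici (0 : ℝ),
      f' (lineMap a b t) (b - a) - f' a (b - a) ≤ L * t * ‖b - a‖ ^ 2 := by
    intro t (ht : 0 ≤ t)
    calc f' (lineMap a b t) (b - a) - f' a (b - a)
        = (f' (lineMap a b t) - f' a) (b - a) := rfl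
      _ ≤ ‖f' (lineMap a b t) - f' a‖ * ‖b - a‖ :=
        (Real.le_norm_self _).trans (ContinuousLinearMap.le_opNorm _ _)
      _ ≤ L * ‖lineMap a b t - a‖ * ‖b - a‖ := by gcongr; exact hlip _ _
      _ = L * t * ‖b - a‖ ^ 2 := by
        rw [lineMap_apply_module', add_sub_cancel_right, norm_smul, Real.norm_of_nonneg ht]; ring
  have hanti : AntitoneOn h (Icc 0 1) := by
    refine antitoneOn_of_deriv_nonpos (convex_Icc 0 1) ?_ ?_ ?_
    · exact HasDerivAt.continuousOn fun t _ ↦ hh t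
    · exact fun t _ ↦ (hh t).differentiableAt.differentiableWithinAt
    · intro t ht
      rw [interior_Icc] at ht
      rw [(hh t).deriv]
      linarith [hslope t (le_of_lt ht.1)]
  have := hanti (left_mem_Icc.2 zero_le_one) (right_mem_Icc.2 zero_le_one) zero_le_one
  simp only [h, lineMap_apply_zero, lineMap_apply_one] at this
  linarith

theorem StrongConvexOn.add_sq_norm_sub_le_of_isMinOn {s : Set E} {m : ℝ} {d z : E}
    (hf : StrongConvexOn s m f) (hd : d ∈ s) (hmin : IsMinOn f s d) (hz : z ∈ s) :
    f d + m / 2 * ‖z - d‖ ^ 2 ≤ f z := by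
  have hsegment : ∀ t ∈ Ioo (0 : ℝ) 1, f d + (1 - t) * (m / 2 * ‖z - d‖ ^ 2) ≤ f z := by
    intro t ⟨ht0, ht1⟩
    have hcomb := hf.2 hd hz (sub_nonneg.2 ht1.le) ht0.le (sub_add_cancel 1 t)
    have hmin' := isMinOn_iff.1 hmin _
      (hf.1 hd hz (sub_nonneg.2 ht1.le) ht0.le (sub_add_cancel 1 t))
    simp only [smul_eq_mul, norm_sub_rev d z] at hcomb
    refine le_of_mul_le_mul_left ?_ ht0
    linarith
  have hcont : Tendsto (fun t : ℝ ↦ f d + (1 - t) * (m / 2 * ‖z - d‖ ^ 2)) (𝓝[>] 0)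
      (𝓝 (f d + m / 2 * ‖z - d‖ ^ 2)) := by
    refine tendsto_nhdsWithin_of_tendsto_nhds ?_
    have : Continuous fun t : ℝ ↦ f d + (1 - t) * (m / 2 * ‖z - d‖ ^ 2) := by fun_prop
    simpa using this.tendsto 0
  exact le_of_tendsto hcont (eventually_of_mem (Ioo_mem_nhdsGT one_pos) hsegment)

end NormedSpace

section InnerProductSpace

variable {E : Type*} [NormedAddCommGroup E] [InnerProductSpace ℝ E]

/-- The objective minimized by a proximal gradient step from `x`, with `g = ∇f(x)`. -/
noncomputable def proxModel (g : E) (c : ℝ) (ψ : E → ℝ) (x : E) (w : E) : ℝ :=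
  ⟪g, w⟫ + c / 2 * ‖w‖ ^ 2 + ψ (x + w)

theorem strongConvexOn_proxModel {ψ : E → ℝ} (hψ : ConvexOn ℝ univ ψ) (g : E) (c : ℝ) (x : E) :
    StrongConvexOn univ c (proxModel g c ψ x) := by
  rw [strongConvexOn_iff_convex]
  have hsplit :
      (fun w ↦ proxModel g c ψ x w - c / 2 * ‖w‖ ^ 2) = fun w ↦ ⟪g, w⟫ + ψ (x + w) := by
    funext w
    simp only [proxModel]
    ring
  rw [hsplit]
  exact ((innerₛₗ ℝ g).convexOn convex_univ).add (hψ.translate_right x)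

theorem add_sq_norm_sub_le_of_isMinOn_proxModel {f ψ : E → ℝ} {f' : E → E} {L c : ℝ}
    (hf : ConvexOn ℝ univ f) (hf' : ∀ y, HasFDerivAt f (innerSL ℝ (f' y)) y)
    (hlip : ∀ y z, ‖f' y - f' z‖ ≤ L * ‖y - z‖) (hψ : ConvexOn ℝ univ ψ) (hLc : L ≤ c) {x d : E}
    (hd : IsMinOn (proxModel (f' x) c ψ x) univ d) (y : E) :
    f (x + d) + ψ (x + d) + c / 2 * ‖x + d - y‖ ^ 2 ≤ f y + ψ y + c / 2 * ‖x - y‖ ^ 2 := by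
  have hdescent : f (x + d) ≤ f x + ⟪f' x, d⟫ + c / 2 * ‖d‖ ^ 2 := by
    have hlip' : ∀ y z, ‖innerSL ℝ (f' y) - innerSL ℝ (f' z)‖ ≤ L * ‖y - z‖ := fun y z ↦ by
      rw [← map_sub, innerSL_apply_norm]; exact hlip y z
    have := le_add_fderiv_sub_add_sq_of_lipschitz hf' hlip' x (x + d)
    simp only [add_sub_cancel_left, innerSL_apply_apply] at this
    linarith [show L / 2 * ‖d‖ ^ 2 ≤ c / 2 * ‖d‖ ^ 2 by gcongr]
  have hgrad : f x + ⟪f' x, y - x⟫ ≤ f y := hf.add_fderiv_sub_le (hf' x) y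
  have hstrong := (strongConvexOn_proxModel hψ (f' x) c x).add_sq_norm_sub_le_of_isMinOn
    (mem_univ d) hd (mem_univ (y - x))
  simp only [proxModel, add_sub_cancel] at hstrong
  rw [show y - x - d = -(x + d - y) by abel, norm_neg, norm_sub_rev y x] at hstrong
  linarith

end InnerProductSpace

theorem proximal_gradient_one_step_bound_general
    {E : Type*} [NormedAddCommGroup E] [InnerProductSpace ℝ E]
    (f : E → ℝ) (f' : E → E) (ψ : E → ℝ) (L : ℝ) (hL : 0 < L)
    (hfconv : ConvexOn ℝ Set.univ f)
    (hderiv : ∀ y, HasFDerivAt f (innerSL ℝ (f' y)) y)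
    (hlip : ∀ y z, ‖f' y - f' z‖ ≤ L * ‖y - z‖)
    (hψconv : ConvexOn ℝ Set.univ ψ)
    (F : E → ℝ) (hF : ∀ y, F y = f y + ψ y)
    (xbar : E)
    (Lbar : ℝ) (hLbar : L ≤ Lbar)
    (x d : E)
    (hd : ∀ z : E,
      ⟪f' x, d⟫ + Lbar / 2 * ‖d‖ ^ 2 + ψ (x + d) ≤
        ⟪f' x, z⟫ + Lbar / 2 * ‖z‖ ^ 2 + ψ (x + z)) :
    ‖x + d - xbar‖ ^ 2 - ‖x - xbar‖ ^ 2 ≤ 2 / Lbar * (F xbar - F (x + d)) := by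
  have hstep := add_sq_norm_sub_le_of_isMinOn_proxModel hfconv hderiv hlip hψconv hLbar
    (fun z _ ↦ hd z) xbar
  rw [hF, hF, div_mul_eq_mul_div, le_div_iff₀ (hL.trans_le hLbar)]
  linarith

/-- A single proximal gradient step with parameter `L̄ ≥ L`
satisfies `‖x⁺ − x̄‖² − ‖x − x̄‖² ≤ (2/L̄)(F* − F(x⁺))` for any minimizer `x̄` of
`F = f + ψ`. -/
theorem proximal_gradient_one_step_bound
    {E : Type*} [NormedAddCommGroup E] [InnerProductSpace ℝ E]
    (f : E → ℝ) (f' : E → E) (ψ : E → ℝ) (L : ℝ) (hL : 0 < L)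
    (hfconv : ConvexOn ℝ Set.univ f)
    (hderiv : ∀ y, HasFDerivAt f (innerSL ℝ (f' y)) y)
    (hlip : ∀ y z, ‖f' y - f' z‖ ≤ L * ‖y - z‖)
    (hψconv : ConvexOn ℝ Set.univ ψ)
    (F : E → ℝ) (hF : ∀ y, F y = f y + ψ y)
    (xbar : E) (hxbar : ∀ y, F xbar ≤ F y)
    (Lbar : ℝ) (hLbar : L ≤ Lbar)
    (x d : E)
    (hd : ∀ z : E,
      ⟪f' x, d⟫ + Lbar / 2 * ‖d‖ ^ 2 + ψ (x + d) ≤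
        ⟪f' x, z⟫ + Lbar / 2 * ‖z‖ ^ 2 + ψ (x + z)) :
    ‖x + d - xbar‖ ^ 2 - ‖x - xbar‖ ^ 2 ≤ 2 / Lbar * (F xbar - F (x + d)) :=
  proximal_gradient_one_step_bound_general f f' ψ L hL hfconv hderiv hlip hψconv F hF xbar Lbar
    hLbar x d hd
end
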